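/- arXiv:2603.07870 — 3 statements merged into one kernel-verified Lean document; each statement's English description precedes it below -/
import Mathlib

section
/- Let d ≥ 1 be an integer, θ ∈ (0,1), and p ≥ 1 a real number. Let Ω ⊆ ℝ^d be a nonempty bounded open set satisfying the interior measure density condition with constant C₀ > 0. Then there exists a constant C > 0, depending only on d, θ, p, C₀, the diameter of Ω and the Lebesgue measure of Ω (and not on f or H), such that for every function f : ℝ^d → ℝ and every H ≥ 0 with |f(x) − f(y)| ≤ H·‖x − y‖^θ for all x, y in the closure of Ω, one has sup_{x ∈ closure Ω} |f(x)| ≤ C·( sup_{x ∈ closure Ω} |f(x)| + H )^{d/(pθ+d)} · ‖f‖_{L^p(Ω)}^{pθ/(pθ+d)}. -/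
/-!
Write `|f x| = 2b`. Hölder continuity keeps `|f| ≥ b` on `B_r(x) ∩ Ω` as long as `H r^θ ≤ b`, and
the density condition turns this into `b^p r^d / C₀ ≤ ‖f‖_p^p`. The radius `r = (b/H)^{1/θ}`
balancing the two gives `b ≲ H^{d/(pθ+d)} ‖f‖_p^{pθ/(pθ+d)}`; when that radius exceeds `diam Ω`,
the radius `diam Ω` gives `b ≲ ‖f‖_p`, which is interpolated against `b ≤ sup |f|`.
-/

open MeasureTheory Metric Set Filter Topology

theorem IsOpen.diam_pos {E : Type*} [NormedAddCommGroup E] [NormedSpace ℝ E] [Nontrivial E]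
    {s : Set E} (hs : IsOpen s) (hne : s.Nonempty) (hb : Bornology.IsBounded s) :
    0 < diam s := by
  obtain ⟨x, hx⟩ := hne
  obtain ⟨ε, hε, hball⟩ := Metric.isOpen_iff.1 hs x hx
  calc 0 < 2 * ε := by positivity
    _ = diam (ball x ε) := (diam_ball_eq x hε.le).symm
    _ ≤ diam s := diam_mono hball hb

theorem continuousOn_of_dist_le_mul_rpow {X Y : Type*} [PseudoMetricSpace X]
    [PseudoMetricSpace Y] {f : X → Y} {s : Set X} {H θ : ℝ} (hθ : 0 < θ)
    (hf : ∀ x ∈ s, ∀ y ∈ s, dist (f x) (f y) ≤ H * dist x y ^ θ) : ContinuousOn f s := by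
  intro x hx
  rw [ContinuousWithinAt, tendsto_iff_dist_tendsto_zero]
  have hlim : Tendsto (fun y => H * dist y x ^ θ) (𝓝[s] x) (𝓝 0) := by
    have hcont : Continuous fun y => H * dist y x ^ θ :=
      continuous_const.mul ((continuous_id.dist continuous_const).rpow_const
        fun _ => Or.inr hθ.le)
    exact (hcont.tendsto' x 0 (by simp [Real.zero_rpow hθ.ne'])).mono_left nhdsWithin_le_nhds
  exact squeeze_zero' (Eventually.of_forall fun _ => dist_nonneg)
    (eventually_nhdsWithin_of_forall fun y hy => hf y hy x hx) hlim

theorem le_rpow_mul_rpow_of_le_of_le {b u v A B : ℝ} (hb : 0 ≤ b) (hu : b ≤ u) (hv : b ≤ v)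
    (hA : 0 ≤ A) (hB : 0 ≤ B) (hAB : A + B = 1) : b ≤ u ^ A * v ^ B :=
  calc b = b ^ A * b ^ B := by rw [← Real.rpow_add' hb (by simp [hAB]), hAB, Real.rpow_one]
    _ ≤ u ^ A * v ^ B := mul_le_mul (by gcongr) (by gcongr) (by positivity)
        (Real.rpow_nonneg (hb.trans hu) A)

theorem le_rpow_mul_rpow_mul_rpow_of_rpow_mul_div_rpow_le {b H c I α β : ℝ} (hb : 0 < b)
    (hH : 0 < H) (hc : 0 ≤ c) (hI : 0 ≤ I) (hα : 0 < α) (hβ : 0 ≤ β)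
    (h : b ^ α * (b / H) ^ β ≤ c * I) :
    b ≤ c ^ (α + β)⁻¹ * H ^ (β / (α + β)) * I ^ (α + β)⁻¹ := by
  have hαβ : 0 < α + β := by positivity
  have hpow : b ^ (α + β) ≤ c * H ^ β * I := by
    rw [Real.div_rpow hb.le hH.le, mul_div_assoc', div_le_iff₀ (by positivity),
      ← Real.rpow_add hb] at h
    linarith
  calc b ≤ (c * H ^ β * I) ^ (α + β)⁻¹ :=
        (Real.le_rpow_inv_iff_of_pos hb.le (by positivity) hαβ).2 hpow
    _ = c ^ (α + β)⁻¹ * H ^ (β / (α + β)) * I ^ (α + β)⁻¹ := by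
        rw [Real.mul_rpow (by positivity) hI, Real.mul_rpow hc (by positivity),
          ← Real.rpow_mul hH.le, div_eq_mul_inv]

theorem rpow_mul_le_setIntegral_of_le_measure {X : Type*} [PseudoMetricSpace X]
    [MeasurableSpace X] [OpensMeasurableSpace X] {μ : Measure X} {Ω : Set X}
    (hΩ : MeasurableSet Ω) (hΩμ : μ Ω ≠ ⊤) {f : X → ℝ} {x : X} {H θ p r b m : ℝ} (hθ : 0 < θ)
    (hp : 0 < p) (hH : 0 ≤ H) (hb : 0 ≤ b) (hfx : ∀ y ∈ Ω, |f x - f y| ≤ H * dist x y ^ θ)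
    (hbr : b + H * r ^ θ ≤ |f x|) (hint : IntegrableOn (fun y => |f y| ^ p) Ω μ)
    (hm : ENNReal.ofReal m ≤ μ (ball x r ∩ Ω)) :
    b ^ p * m ≤ ∫ y in Ω, |f y| ^ p ∂μ := by
  have hfin : μ (ball x r ∩ Ω) ≠ ⊤ := (measure_inter_lt_top_of_right_ne_top hΩμ).ne
  have hlow : ∀ y ∈ ball x r ∩ Ω, b ^ p ≤ |f y| ^ p := by
    rintro y ⟨hyr, hyΩ⟩
    have hdist : H * dist x y ^ θ ≤ H * r ^ θ := by
      gcongr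
      exact (mem_ball'.1 hyr).le
    have := abs_sub_abs_le_abs_sub (f x) (f y)
    exact Real.rpow_le_rpow hb (by linarith [hfx y hyΩ]) hp.le
  calc b ^ p * m ≤ b ^ p * μ.real (ball x r ∩ Ω) := by
        gcongr
        exact (ENNReal.ofReal_le_iff_le_toReal hfin).1 hm
    _ ≤ ∫ y in ball x r ∩ Ω, |f y| ^ p ∂μ :=
        setIntegral_ge_of_const_le_real (measurableSet_ball.inter hΩ) hfin hlow
          (hint.mono_set inter_subset_right)
    _ ≤ ∫ y in Ω, |f y| ^ p ∂μ :=
        setIntegral_mono_set hint (Eventually.of_forall fun y => by positivity)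
          inter_subset_right.eventuallyLE

theorem IsCompact.le_biSup_of_continuousOn {X : Type*} [TopologicalSpace X] {s : Set X}
    (hs : IsCompact s) {g : X → ℝ} (hg : ContinuousOn g s) {x : X} (hx : x ∈ s) :
    g x ≤ ⨆ y ∈ s, g y := by
  refine le_ciSup₂ (f := fun y (_ : y ∈ s) => g y) ((hs.bddAbove_image hg).mono ?_) x hx
  rintro _ ⟨_, ⟨y, rfl⟩, ⟨hy, rfl⟩⟩
  exact mem_image_of_mem _ hy

section RadiusChoice

variable {d : ℕ} {θ p C₀ D : ℝ}

theorem le_rpow_mul_rpow_of_rpow_mul_pow_div_le (hp : 0 < p) (hC₀ : 0 < C₀) (hD : 0 < D)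
    {b I : ℝ} (hb : 0 ≤ b) (hI : 0 ≤ I) (h : b ^ p * (D ^ d / C₀) ≤ I) :
    b ≤ (C₀ / D ^ d) ^ (1 / p) * I ^ (1 / p) := by
  rw [← Real.mul_rpow (by positivity) hI, one_div]
  refine (Real.le_rpow_inv_iff_of_pos hb (by positivity) hp).2 ?_
  rw [div_mul_eq_mul_div, le_div_iff₀ (by positivity)]
  rw [mul_div_assoc', div_le_iff₀ hC₀] at h
  linarith

theorem le_mul_rpow_mul_rpow_of_forall_small_radius (hθ : 0 < θ) (hp : 0 < p) (hC₀ : 0 < C₀)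
    (hD : 0 < D) {b H I : ℝ} (hb : 0 < b) (hI : 0 ≤ I) (hHD : b < H * D ^ θ)
    (hball : ∀ r, 0 < r → r ≤ D → H * r ^ θ ≤ b → b ^ p * (r ^ d / C₀) ≤ I) :
    b ≤ C₀ ^ (θ / (p * θ + d)) * H ^ ((d : ℝ) / (p * θ + d)) *
      (I ^ (1 / p)) ^ (p * θ / (p * θ + d)) := by
  have hH : 0 < H := by
    by_contra! h
    nlinarith [mul_nonpos_of_nonpos_of_nonneg h (Real.rpow_nonneg hD.le θ)]
  set r := (b / H) ^ θ⁻¹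
  have hrθ : r ^ θ = b / H := Real.rpow_inv_rpow (by positivity) hθ.ne'
  have hrD : r ≤ D := by
    calc r ≤ (D ^ θ) ^ θ⁻¹ := by
          refine Real.rpow_le_rpow (by positivity) ?_ (by positivity)
          rw [div_le_iff₀ hH]
          linarith
      _ = D := Real.rpow_rpow_inv hD.le hθ.ne'
  have hrd : r ^ d = (b / H) ^ ((d : ℝ) / θ) := by
    rw [← Real.rpow_natCast, ← Real.rpow_mul (by positivity), inv_mul_eq_div]
  have hbr := hball r (by positivity) hrD (by rw [hrθ, mul_div_cancel₀ _ hH.ne'])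
  rw [hrd, mul_div_assoc', div_le_iff₀ hC₀, mul_comm I] at hbr
  have hexp_C : (p + d / θ)⁻¹ = θ / (p * θ + d) := by field_simp
  have hexp_H : (d / θ) / (p + d / θ) = d / (p * θ + d) := by field_simp
  have hexp_I : I ^ (p + d / θ)⁻¹ = (I ^ (1 / p)) ^ (p * θ / (p * θ + d)) := by
    rw [← Real.rpow_mul hI]
    congr 1
    field_simp
  have hb' := le_rpow_mul_rpow_mul_rpow_of_rpow_mul_div_rpow_le hb hH hC₀.le hI hp
    (by positivity) hbr
  rwa [hexp_I, hexp_C, hexp_H] at hb'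

theorem exists_le_mul_rpow_mul_rpow_of_forall_radius (hθ : 0 < θ) (hp : 0 < p) (hC₀ : 0 < C₀)
    (hD : 0 < D) :
    ∃ C, 0 < C ∧ ∀ b H I : ℝ, 0 ≤ b → 0 ≤ H → 0 ≤ I →
      (∀ r, 0 < r → r ≤ D → H * r ^ θ ≤ b → b ^ p * (r ^ d / C₀) ≤ I) →
      b ≤ C * (b + H) ^ ((d : ℝ) / (p * θ + d)) * (I ^ (1 / p)) ^ (p * θ / (p * θ + d)) := by
  set A := (d : ℝ) / (p * θ + d) with hA
  set B := p * θ / (p * θ + d) with hB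
  have hAB : A + B = 1 := by
    rw [hA, hB, ← add_div, add_comm, div_self (by positivity)]
  set K := (C₀ / D ^ d) ^ (1 / p)
  refine ⟨C₀ ^ (θ / (p * θ + d)) + K ^ B, by positivity, fun b H I hb hH hI hball => ?_⟩
  rcases hb.eq_or_lt with rfl | hb
  · positivity
  by_cases hHD : H * D ^ θ ≤ b
  · have hbK : b ≤ K * I ^ (1 / p) :=
      le_rpow_mul_rpow_of_rpow_mul_pow_div_le hp hC₀ hD hb.le hI (hball D hD le_rfl hHD)
    calc b ≤ (b + H) ^ A * (K * I ^ (1 / p)) ^ B :=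
          le_rpow_mul_rpow_of_le_of_le hb.le (by linarith) hbK (by positivity) (by positivity) hAB
      _ = K ^ B * (b + H) ^ A * (I ^ (1 / p)) ^ B := by
          rw [Real.mul_rpow (by positivity) (by positivity)]
          ring
      _ ≤ _ := by
          gcongr
          exact le_add_of_nonneg_left (by positivity)
  · calc b ≤ C₀ ^ (θ / (p * θ + d)) * H ^ A * (I ^ (1 / p)) ^ B :=
          le_mul_rpow_mul_rpow_of_forall_small_radius hθ hp hC₀ hD hb hI (not_le.1 hHD) hball
      _ ≤ _ := by
          gcongr
          · exact le_add_of_nonneg_right (by positivity)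
          · exact le_add_of_nonneg_left hb.le

end RadiusChoice

/-- Interpolation inequality involving the Hölder norm (Lemma `EHRLEM`, inequality (ineq:full)):
`‖f‖_∞ ≤ C ‖f‖_{C^θ}^{d/(pθ+d)} ‖f‖_p^{pθ/(pθ+d)}`, where the `C^θ`-norm is
`sup_{closure Ω} |f| + H` with `H` the Hölder seminorm. -/
theorem holder_interpolation_full
    (d : ℕ) (hd : 1 ≤ d) (θ p C₀ : ℝ) (hθ : θ ∈ Set.Ioo (0 : ℝ) 1)
    (hp : 1 ≤ p) (hC₀ : 0 < C₀)
    (Ω : Set (EuclideanSpace ℝ (Fin d))) (hΩne : Ω.Nonempty) (hΩo : IsOpen Ω)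
    (hΩb : Bornology.IsBounded Ω)
    (hdens : ∀ x ∈ closure Ω, ∀ r : ℝ, 0 < r → r ≤ Metric.diam Ω →
      ENNReal.ofReal (r ^ d / C₀) ≤ volume (Metric.ball x r ∩ Ω)) :
    ∃ C : ℝ, 0 < C ∧
      ∀ (f : EuclideanSpace ℝ (Fin d) → ℝ) (H : ℝ), 0 ≤ H →
        (∀ x ∈ closure Ω, ∀ y ∈ closure Ω, |f x - f y| ≤ H * ‖x - y‖ ^ θ) →
        ∀ x ∈ closure Ω,
          |f x| ≤ C * ((⨆ y ∈ closure Ω, |f y|) + H) ^ ((d : ℝ) / (p * θ + d)) *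
              ((∫ y in Ω, |f y| ^ p) ^ (1 / p)) ^ (p * θ / (p * θ + d)) := by
  obtain ⟨hθ0, -⟩ := hθ
  have hp0 : 0 < p := by linarith
  have : Nonempty (Fin d) := ⟨⟨0, hd⟩⟩
  obtain ⟨C, hC, hCb⟩ := exists_le_mul_rpow_mul_rpow_of_forall_radius (d := d) hθ0 hp0 hC₀
    (hΩo.diam_pos hΩne hΩb)
  refine ⟨2 * C, by positivity, fun f H hH hf x hx => ?_⟩
  simp only [← dist_eq_norm] at hf
  have hcont : ContinuousOn f (closure Ω) :=
    continuousOn_of_dist_le_mul_rpow hθ0 (by simpa only [Real.dist_eq] using hf)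
  have hint : IntegrableOn (fun y => |f y| ^ p) Ω :=
    ((hcont.abs.rpow_const fun _ _ => Or.inr hp0.le).integrableOn_compact
      hΩb.isCompact_closure).mono_set subset_closure
  have hsup := hΩb.isCompact_closure.le_biSup_of_continuousOn hcont.abs hx
  have hhalf := hCb (|f x| / 2) H _ (by positivity) hH (by positivity) fun r hr hrD hrb =>
    rpow_mul_le_setIntegral_of_le_measure hΩo.measurableSet hΩb.measure_lt_top.ne hθ0 hp0 hH
      (by positivity) (fun y hy => hf x hx y (subset_closure hy)) (by linarith) hint
      (hdens x hx r hr hrD)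
  calc |f x| = 2 * (|f x| / 2) := by ring
    _ ≤ 2 * (C * (|f x| / 2 + H) ^ ((d : ℝ) / (p * θ + d)) *
          ((∫ y in Ω, |f y| ^ p) ^ (1 / p)) ^ (p * θ / (p * θ + d))) := by gcongr
    _ ≤ _ := by
        rw [← mul_assoc, ← mul_assoc]
        gcongr
        linarith [abs_nonneg (f x)]
end

section
/- Let d ≥ 1 be an integer, θ ∈ (0,1), and p ≥ 1 a real number. Let Ω ⊆ ℝ^d be a nonempty bounded open set satisfying the interior measure density condition with constant C₀ > 0. Then there exists C > 0 depending only on d, θ, p and C₀ with the following property: whenever f : ℝ^d → ℝ and H > 0 satisfy |f(x) − f(y)| ≤ H·‖x − y‖^θ for all x, y in the closure of Ω, and in addition d·C₀^{1/p}·‖f‖_{L^p(Ω)} ≤ p·θ·H·(diam Ω)^{(pθ+d)/p} (i.e. the optimal radius r_* := (d·C₀^{1/p}·‖f‖_{L^p(Ω)} / (p·θ·H))^{p/(pθ+d)} satisfies r_* ≤ diam Ω), then sup_{x ∈ closure Ω} |f(x)| ≤ C · H^{d/(pθ+d)} · ‖f‖_{L^p(Ω)}^{pθ/(pθ+d)}.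 -/
/-!
Fix `x ∈ closure Ω` and `0 < r ≤ diam Ω`. By Hölder continuity, `|f x| - H r^θ ≤ |f|` on
`B_r(x) ∩ Ω`, a set of measure at least `r^d / C₀`; averaging `|f|^p` over it gives
`|f x| ≤ C₀^{1/p} ‖f‖_p / r^{d/p} + H r^θ`. The right-hand side is minimized at the radius `r_*`,
which the hypothesis places in `(0, diam Ω]`; evaluating there gives the bound. When `‖f‖_p = 0`
one lets `r → 0` instead.
-/

open MeasureTheory Metric Set Filter Topology

lemma continuousOn_of_abs_sub_le_mul_dist_rpow {X : Type*} [PseudoMetricSpace X] {f : X → ℝ}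
    {s : Set X} {H θ : ℝ} (hθ : 0 < θ)
    (hf : ∀ x ∈ s, ∀ y ∈ s, |f x - f y| ≤ H * dist x y ^ θ) : ContinuousOn f s := by
  intro x hx
  rw [ContinuousWithinAt, tendsto_iff_dist_tendsto_zero]
  have hlim : Tendsto (fun y => H * dist y x ^ θ) (𝓝[s] x) (𝓝 0) := by
    have hcont : Continuous fun y => H * dist y x ^ θ :=
      continuous_const.mul ((continuous_id.dist continuous_const).rpow_const
        fun _ => Or.inr hθ.le)
    simpa [Real.zero_rpow hθ.ne'] using (hcont.tendsto x).mono_left nhdsWithin_le_nhds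
  refine squeeze_zero' (Eventually.of_forall fun _ => dist_nonneg) ?_ hlim
  filter_upwards [self_mem_nhdsWithin] with y hy
  rw [Real.dist_eq]
  exact hf y hy x hx

section Averaging

variable {X : Type*} [MeasurableSpace X] {μ : Measure X}

lemma le_setIntegral_div_rpow_add_of_forall_le_add {S : Set X} {g : X → ℝ} {c ε V p : ℝ}
    (hp : 0 < p) (hV : 0 < V) (hS : MeasurableSet S) (hVS : ENNReal.ofReal V ≤ μ S)
    (hS_fin : μ S ≠ ⊤) (hg : IntegrableOn (fun y => |g y| ^ p) S μ)
    (h : ∀ y ∈ S, c ≤ |g y| + ε) :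
    c ≤ ((∫ y in S, |g y| ^ p ∂μ) / V) ^ (1 / p) + ε := by
  set I := ∫ y in S, |g y| ^ p ∂μ
  have hIV : 0 ≤ I / V := div_nonneg (setIntegral_nonneg hS fun y _ => by positivity) hV.le
  rcases le_or_gt c ε with hcε | hcε
  · linarith [Real.rpow_nonneg hIV (1 / p)]
  have hVS' : V ≤ μ.real S := (ENNReal.ofReal_le_iff_le_toReal hS_fin).1 hVS
  have hmass : (c - ε) ^ p * μ.real S ≤ I :=
    setIntegral_ge_of_const_le_real hS hS_fin
      (fun y hy => Real.rpow_le_rpow (by linarith) (by linarith [h y hy]) hp.le) hg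
  have hpow : (c - ε) ^ p ≤ I / V := by
    rw [le_div_iff₀ hV]
    exact (mul_le_mul_of_nonneg_left hVS' (by positivity)).trans hmass
  have := (Real.le_rpow_inv_iff_of_pos (by linarith) hIV hp).2 hpow
  rw [one_div]
  linarith

lemma abs_le_of_measure_ball_inter_ge [PseudoMetricSpace X] [ProperSpace X]
    [OpensMeasurableSpace X] [IsFiniteMeasureOnCompacts μ] {f : X → ℝ} {Ω : Set X} {x : X}
    {C₀ H θ p r : ℝ} {n : ℕ} (hΩ : MeasurableSet Ω) (hC₀ : 0 < C₀) (hH : 0 ≤ H) (hθ : 0 ≤ θ)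
    (hp : 0 < p) (hr : 0 < r) (hμ : ENNReal.ofReal (r ^ n / C₀) ≤ μ (ball x r ∩ Ω))
    (hint : IntegrableOn (fun y => |f y| ^ p) Ω μ)
    (hf : ∀ y ∈ Ω, |f x - f y| ≤ H * dist x y ^ θ) :
    |f x| ≤ C₀ ^ (1 / p) * (∫ y in Ω, |f y| ^ p ∂μ) ^ (1 / p) / r ^ (n / p : ℝ) + H * r ^ θ := by
  have hS : MeasurableSet (ball x r ∩ Ω) := measurableSet_ball.inter hΩ
  have hS_fin : μ (ball x r ∩ Ω) < ⊤ :=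
    (measure_mono inter_subset_left).trans_lt measure_ball_lt_top
  have hclose : ∀ y ∈ ball x r ∩ Ω, |f x| ≤ |f y| + H * r ^ θ := fun y hy => by
    have hdist : dist x y ^ θ ≤ r ^ θ := Real.rpow_le_rpow dist_nonneg (mem_ball'.1 hy.1).le hθ
    have := abs_sub_abs_le_abs_sub (f x) (f y)
    nlinarith [hf y hy.2, mul_le_mul_of_nonneg_left hdist hH]
  have hmono : ∫ y in ball x r ∩ Ω, |f y| ^ p ∂μ ≤ ∫ y in Ω, |f y| ^ p ∂μ :=
    setIntegral_mono_set hint (Eventually.of_forall fun y => by positivity)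
      inter_subset_right.eventuallyLE
  calc |f x| ≤ ((∫ y in ball x r ∩ Ω, |f y| ^ p ∂μ) / (r ^ n / C₀)) ^ (1 / p) + H * r ^ θ :=
        le_setIntegral_div_rpow_add_of_forall_le_add hp (by positivity) hS hμ hS_fin.ne
          (hint.mono_set inter_subset_right) hclose
    _ ≤ ((∫ y in Ω, |f y| ^ p ∂μ) / (r ^ n / C₀)) ^ (1 / p) + H * r ^ θ := by gcongr
    _ = _ := by
      rw [div_div_eq_mul_div, Real.div_rpow (by positivity) (by positivity),
        Real.mul_rpow (by positivity) hC₀.le, ← Real.rpow_natCast, ← Real.rpow_mul hr.le,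
        mul_one_div, mul_comm]

end Averaging

lemma le_of_forall_le_div_rpow_add_mul_rpow {u A H α θ D : ℝ} (hA : 0 ≤ A) (hH : 0 < H)
    (hα : 0 < α) (hθ : 0 < θ) (hD : 0 < D) (hopt : α * A ≤ θ * H * D ^ (α + θ))
    (h : ∀ r, 0 < r → r ≤ D → u ≤ A / r ^ α + H * r ^ θ) :
    u ≤ (1 + θ / α) * (α / θ) ^ (θ / (α + θ)) * H ^ (α / (α + θ)) * A ^ (θ / (α + θ)) := by
  have hαθ : 0 < α + θ := by positivity
  rcases hA.eq_or_lt with rfl | hA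
  · rw [Real.zero_rpow (by positivity), mul_zero]
    have hlim : Tendsto (fun r : ℝ => H * r ^ θ) (𝓝[>] 0) (𝓝 0) := by
      have := ((Real.continuousAt_rpow_const 0 θ (Or.inr hθ.le)).const_mul H).tendsto
      simpa [Real.zero_rpow hθ.ne'] using this.mono_left nhdsWithin_le_nhds
    refine ge_of_tendsto hlim ?_
    filter_upwards [Ioo_mem_nhdsGT hD] with r hr
    simpa using h r hr.1 hr.2.le
  -- the minimizer of `A / r^α + H r^θ`, where the two terms are in the ratio `θ : α`
  set r := (α * A / (θ * H)) ^ (1 / (α + θ))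
  have hr : 0 < r := by positivity
  have hrpow : r ^ (α + θ) = α * A / (θ * H) := by
    rw [← Real.rpow_mul (by positivity), one_div_mul_cancel hαθ.ne', Real.rpow_one]
  have hrD : r ≤ D := by
    rw [← Real.rpow_le_rpow_iff hr.le hD.le hαθ, hrpow, div_le_iff₀ (by positivity)]
    linarith
  have hbalance : A / r ^ α = θ / α * (H * r ^ θ) := by
    rw [Real.rpow_add hr] at hrpow
    have : 0 < r ^ α := by positivity
    field_simp at hrpow ⊢
    linarith
  have hvalue : H * r ^ θ = (α / θ) ^ (θ / (α + θ)) * H ^ (α / (α + θ)) * A ^ (θ / (α + θ)) := by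
    have hexp : α / (α + θ) = 1 - θ / (α + θ) := by field_simp; ring
    rw [← Real.rpow_mul (by positivity), one_div_mul_eq_div, mul_div_mul_comm,
      Real.mul_rpow (by positivity) (by positivity), Real.div_rpow hA.le hH.le, hexp,
      Real.rpow_sub hH, Real.rpow_one]
    field_simp
  calc u ≤ A / r ^ α + H * r ^ θ := h r hr hrD
    _ = (1 + θ / α) * (H * r ^ θ) := by rw [hbalance]; ring
    _ = _ := by rw [hvalue]; ring

lemma diam_pos_of_isOpen {E : Type*} [NormedAddCommGroup E] [NormedSpace ℝ E] [Nontrivial E]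
    {Ω : Set E} (hΩ : IsOpen Ω) (hne : Ω.Nonempty) (hb : Bornology.IsBounded Ω) :
    0 < diam Ω := by
  obtain ⟨z, hz⟩ := hne
  obtain ⟨ε, hε, hball⟩ := Metric.isOpen_iff.1 hΩ z hz
  calc 0 < 2 * ε := by positivity
    _ = diam (ball z ε) := (diam_ball_eq z hε.le).symm
    _ ≤ diam Ω := diam_mono hball hb

/-- Case 1 of the proof of Lemma `EHRLEM`: when the optimal radius
`r_* = (d C₀^{1/p} ‖f‖_p / (pθH))^{p/(pθ+d)}` satisfies `r_* ≤ diam Ω`, one has the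
multiplicative interpolation bound `‖f‖_∞ ≤ C H^{d/(pθ+d)} ‖f‖_p^{pθ/(pθ+d)}`,
with `C` depending only on `d, θ, p, C₀`. -/
theorem holder_interpolation_case_one
    (d : ℕ) (hd : 1 ≤ d) (θ p C₀ : ℝ) (hθ : θ ∈ Set.Ioo (0 : ℝ) 1)
    (hp : 1 ≤ p) (hC₀ : 0 < C₀) :
    ∃ C : ℝ, 0 < C ∧
      ∀ (Ω : Set (EuclideanSpace ℝ (Fin d))), Ω.Nonempty → IsOpen Ω →
        Bornology.IsBounded Ω →
        (∀ x ∈ closure Ω, ∀ r : ℝ, 0 < r → r ≤ Metric.diam Ω →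
          ENNReal.ofReal (r ^ d / C₀) ≤ volume (Metric.ball x r ∩ Ω)) →
        ∀ (f : EuclideanSpace ℝ (Fin d) → ℝ) (H : ℝ), 0 < H →
          (∀ x ∈ closure Ω, ∀ y ∈ closure Ω, |f x - f y| ≤ H * ‖x - y‖ ^ θ) →
          (d : ℝ) * C₀ ^ (1 / p) * (∫ y in Ω, |f y| ^ p) ^ (1 / p) ≤
            p * θ * H * Metric.diam Ω ^ ((p * θ + d) / p) →
          ∀ x ∈ closure Ω,
            |f x| ≤ C * H ^ ((d : ℝ) / (p * θ + d)) *
              ((∫ y in Ω, |f y| ^ p) ^ (1 / p)) ^ (p * θ / (p * θ + d)) := by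
  obtain ⟨hθ0, -⟩ := hθ
  have hp0 : 0 < p := by linarith
  have : Nonempty (Fin d) := ⟨⟨0, hd⟩⟩
  have hexpN : θ / (d / p + θ) = p * θ / (p * θ + d) := by field_simp; ring
  have hexpH : (d / p : ℝ) / (d / p + θ) = d / (p * θ + d) := by field_simp; ring
  refine ⟨(1 + θ / (d / p)) * ((d / p) / θ) ^ (p * θ / (p * θ + d)) *
    (C₀ ^ (1 / p)) ^ (p * θ / (p * θ + d)), by positivity, ?_⟩
  intro Ω hΩne hΩopen hΩbd hmd f H hH hHol hopt x hx
  set N := (∫ y in Ω, |f y| ^ p) ^ (1 / p)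
  have hHol' : ∀ x ∈ closure Ω, ∀ y ∈ closure Ω, |f x - f y| ≤ H * dist x y ^ θ := by
    simpa only [dist_eq_norm] using hHol
  have hint : IntegrableOn (fun y => |f y| ^ p) Ω :=
    (((continuousOn_of_abs_sub_le_mul_dist_rpow hθ0 hHol').abs.rpow_const
      fun _ _ => Or.inr hp0.le).integrableOn_compact hΩbd.isCompact_closure).mono_set
      subset_closure
  have hlocal : ∀ r, 0 < r → r ≤ diam Ω →
      |f x| ≤ C₀ ^ (1 / p) * N / r ^ (d / p : ℝ) + H * r ^ θ := fun r hr hrD =>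
    abs_le_of_measure_ball_inter_ge hΩopen.measurableSet hC₀ hH.le hθ0.le hp0 hr
      (hmd x hx r hr hrD) hint fun y hy => hHol' x hx y (subset_closure hy)
  have hopt' : d / p * (C₀ ^ (1 / p) * N) ≤ θ * H * diam Ω ^ (d / p + θ : ℝ) := by
    rw [show (d / p + θ : ℝ) = (p * θ + d) / p by field_simp; ring, div_mul_eq_mul_div,
      div_le_iff₀ hp0]
    linarith
  have := le_of_forall_le_div_rpow_add_mul_rpow (by positivity) hH (by positivity) hθ0
    (diam_pos_of_isOpen hΩopen hΩne hΩbd) hopt' hlocal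
  rw [hexpN, hexpH, Real.mul_rpow (by positivity) (by positivity)] at this
  linarith
end

section
/- Let d ≥ 1 be an integer, θ ∈ (0,1), and p ≥ 1 a real number. Let Ω ⊆ ℝ^d be a nonempty bounded open set satisfying the interior measure density condition with constant C₀ > 0. Let f : ℝ^d → ℝ and H ≥ 0 satisfy |f(x) − f(y)| ≤ H·‖x − y‖^θ for all x, y in the closure of Ω. If p·θ·H·(diam Ω)^{(pθ+d)/p} < d·C₀^{1/p}·‖f‖_{L^p(Ω)}, then sup_{x ∈ closure Ω} |f(x)| ≤ ( d/(pθ) + 1 ) · C₀^{1/p} · (diam Ω)^{−d/p} · ‖f‖_{L^p(Ω)}. -/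
/-!
If `|f x| > H r^θ` then, by the Hölder bound, `|f| ≥ |f x| - H r^θ` on `B_r(x) ∩ Ω`, a set of
measure at least `r^d / C₀`; integrating `|f|^p` over it gives
`|f x| ≤ H r^θ + C₀^{1/p} r^{-d/p} ‖f‖_p`. Take `r = diam Ω`: the case hypothesis says precisely
that `H (diam Ω)^θ` is at most `d / (pθ)` times the second term.
-/

open MeasureTheory Metric Set

theorem HolderOnWith.of_dist_le {X Y : Type*} [PseudoMetricSpace X] [PseudoMetricSpace Y]
    {C r : NNReal} {f : X → Y} {s : Set X}
    (h : ∀ x ∈ s, ∀ y ∈ s, dist (f x) (f y) ≤ C * dist x y ^ (r : ℝ)) :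
    HolderOnWith C r f s := by
  intro x hx y hy
  rw [edist_dist, edist_dist, ENNReal.ofReal_rpow_of_nonneg dist_nonneg r.coe_nonneg,
    ← ENNReal.ofReal_coe_nnreal, ← ENNReal.ofReal_mul C.coe_nonneg]
  exact ENNReal.ofReal_le_ofReal (h x hx y hy)

theorem diam_pos_of_measure_ne_zero {α : Type*} [MetricSpace α] [MeasurableSpace α]
    {μ : Measure α} [NullSingletonClass μ] {s : Set α} (hs : Bornology.IsBounded s) (hμ : μ s ≠ 0) :
    0 < diam s :=
  diam_pos (not_subsingleton_iff.1 fun h ↦ hμ (h.measure_zero μ)) hs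

theorem abs_le_add_rpow_setIntegral_div {α : Type*} [MeasurableSpace α] {μ : Measure α}
    {S Ω : Set α} {f : α → ℝ} {p m δ : ℝ} (x : α) (hp : 0 < p) (hm : 0 < m)
    (hS : MeasurableSet S) (hSΩ : S ⊆ Ω) (hμS : μ S ≠ ⊤) (hmS : m ≤ μ.real S)
    (hf : IntegrableOn (fun y ↦ |f y| ^ p) Ω μ) (hosc : ∀ y ∈ S, |f x - f y| ≤ δ) :
    |f x| ≤ δ + ((∫ y in Ω, |f y| ^ p ∂μ) / m) ^ (1 / p) := by
  set I := ∫ y in Ω, |f y| ^ p ∂μ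
  have hI : 0 ≤ I := integral_nonneg fun y ↦ by positivity
  rcases le_or_gt (|f x| - δ) 0 with hle | hpos
  · linarith [Real.rpow_nonneg (div_nonneg hI hm.le) (1 / p)]
  have hlow : ∀ y ∈ S, (|f x| - δ) ^ p ≤ |f y| ^ p := fun y hy ↦ by
    gcongr
    linarith [hosc y hy, abs_sub_abs_le_abs_sub (f x) (f y)]
  have hmass : (|f x| - δ) ^ p * m ≤ I :=
    calc (|f x| - δ) ^ p * m ≤ (|f x| - δ) ^ p * μ.real S := by gcongr
      _ ≤ ∫ y in S, |f y| ^ p ∂μ :=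
        setIntegral_ge_of_const_le_real hS hμS hlow (hf.mono_set hSΩ)
      _ ≤ I := setIntegral_mono_set hf (ae_of_all _ fun y ↦ by positivity) hSΩ.eventuallyLE
  have : |f x| - δ ≤ (I / m) ^ p⁻¹ :=
    (Real.le_rpow_inv_iff_of_pos hpos.le (div_nonneg hI hm.le) hp).2 ((le_div_iff₀ hm).2 hmass)
  rw [one_div]
  linarith

theorem rpow_one_div_div_pow_div {I r C p : ℝ} (d : ℕ) (hI : 0 ≤ I) (hr : 0 < r) (hC : 0 ≤ C) :
    (I / (r ^ d / C)) ^ (1 / p) = C ^ (1 / p) * r ^ (-(d : ℝ) / p) * I ^ (1 / p) := by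
  rw [div_div_eq_mul_div, Real.div_rpow (by positivity) (by positivity),
    Real.mul_rpow hI hC, ← Real.rpow_natCast, ← Real.rpow_mul hr.le, neg_div,
    Real.rpow_neg hr.le, mul_one_div]
  ring

theorem abs_le_mul_rpow_add_of_measure_density {α : Type*} [PseudoMetricSpace α]
    [MeasurableSpace α] [OpensMeasurableSpace α] {μ : Measure α} {Ω : Set α} {f : α → ℝ}
    {d : ℕ} {p C₀ H θ r : ℝ} (x : α) (hΩ : MeasurableSet Ω) (hp : 0 < p) (hC₀ : 0 < C₀)
    (hH : 0 ≤ H) (hθ : 0 ≤ θ) (hr : 0 < r)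
    (hdens : ENNReal.ofReal (r ^ d / C₀) ≤ μ (ball x r ∩ Ω)) (hfin : μ (ball x r ∩ Ω) ≠ ⊤)
    (hf : IntegrableOn (fun y ↦ |f y| ^ p) Ω μ)
    (hHol : ∀ y ∈ Ω, |f x - f y| ≤ H * dist x y ^ θ) :
    |f x| ≤ H * r ^ θ + C₀ ^ (1 / p) * r ^ (-(d : ℝ) / p) * (∫ y in Ω, |f y| ^ p ∂μ) ^ (1 / p) := by
  rw [← rpow_one_div_div_pow_div d (integral_nonneg fun y ↦ by positivity) hr hC₀.le]
  refine abs_le_add_rpow_setIntegral_div x hp (by positivity) (measurableSet_ball.inter hΩ)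
    inter_subset_right hfin ((ENNReal.ofReal_le_iff_le_toReal hfin).1 hdens) hf fun y hy ↦ ?_
  calc |f x - f y| ≤ H * dist x y ^ θ := hHol y hy.2
    _ ≤ H * r ^ θ := by gcongr; exact (mem_ball'.1 hy.1).le

theorem mul_rpow_le_of_mul_rpow_add_div_lt {d p θ H D c n : ℝ} (hD : 0 < D) (hpθ : 0 < p * θ)
    (h : p * θ * H * D ^ ((p * θ + d) / p) < d * c * n) :
    H * D ^ θ ≤ d / (p * θ) * (c * D ^ (-d / p) * n) := by
  have hsplit : D ^ ((p * θ + d) / p) = D ^ θ * D ^ (d / p) := by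
    rw [← Real.rpow_add hD, add_div, mul_div_cancel_left₀ θ (left_ne_zero_of_mul hpθ.ne')]
  have hcancel : D ^ (-d / p) * D ^ (d / p) = 1 := by
    rw [← Real.rpow_add hD, neg_div, neg_add_cancel, Real.rpow_zero]
  rw [div_mul_eq_mul_div, le_div_iff₀ hpθ]
  calc H * D ^ θ * (p * θ) = p * θ * H * D ^ ((p * θ + d) / p) * D ^ (-d / p) := by
        rw [hsplit]; linear_combination (-(p * θ * H * D ^ θ)) * hcancel
    _ ≤ d * c * n * D ^ (-d / p) := by gcongr
    _ = _ := by ring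

theorem holder_interpolation_case_two_general
    (d : ℕ) (θ p C₀ : ℝ) (hθ : θ ∈ Set.Ioo (0 : ℝ) 1)
    (hp : 1 ≤ p) (hC₀ : 0 < C₀)
    (Ω : Set (EuclideanSpace ℝ (Fin d))) (hΩo : IsOpen Ω)
    (hΩb : Bornology.IsBounded Ω)
    (hdens : ∀ x ∈ closure Ω, ∀ r : ℝ, 0 < r → r ≤ Metric.diam Ω →
      ENNReal.ofReal (r ^ d / C₀) ≤ volume (Metric.ball x r ∩ Ω))
    (f : EuclideanSpace ℝ (Fin d) → ℝ) (H : ℝ) (hH : 0 ≤ H)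
    (hHol : ∀ x ∈ closure Ω, ∀ y ∈ closure Ω, |f x - f y| ≤ H * ‖x - y‖ ^ θ)
    (hcase : p * θ * H * Metric.diam Ω ^ ((p * θ + d) / p) <
      (d : ℝ) * C₀ ^ (1 / p) * (∫ y in Ω, |f y| ^ p) ^ (1 / p)) :
    ∀ x ∈ closure Ω,
      |f x| ≤ ((d : ℝ) / (p * θ) + 1) * C₀ ^ (1 / p) *
        Metric.diam Ω ^ (-(d : ℝ) / p) * (∫ y in Ω, |f y| ^ p) ^ (1 / p) := by
  intro x hx
  obtain ⟨hθ₀, -⟩ := hθ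
  have hp₀ : 0 < p := one_pos.trans_le hp
  set D := diam Ω
  set N := (∫ y in Ω, |f y| ^ p) ^ (1 / p)
  -- `hcase` forces `d ≠ 0` and `‖f‖_p ≠ 0`, so `Ω` is not null and, points being null,
  -- has positive diameter.
  have hRHS : 0 < (d : ℝ) * C₀ ^ (1 / p) * N := by
    refine lt_of_le_of_lt ?_ hcase
    have := diam_nonneg (s := Ω)
    positivity
  have : Nonempty (Fin d) := ⟨⟨0, Nat.pos_of_ne_zero (by rintro rfl; simp at hRHS)⟩⟩
  have hvol : volume Ω ≠ 0 := fun h ↦ by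
    simp [N, Measure.restrict_eq_zero.2 h, Real.zero_rpow (inv_pos.2 hp₀).ne'] at hRHS
  have hD : 0 < D := diam_pos_of_measure_ne_zero hΩb hvol
  have hcont : ContinuousOn f (closure Ω) :=
    (HolderOnWith.of_dist_le (C := ⟨H, hH⟩) (r := ⟨θ, hθ₀.le⟩) fun a ha b hb ↦ by
      rw [Real.dist_eq, dist_eq_norm]; exact hHol a ha b hb).continuousOn hθ₀
  have hint : IntegrableOn (fun y ↦ |f y| ^ p) Ω :=
    ((hcont.abs.rpow_const fun _ _ ↦ Or.inr hp₀.le).integrableOn_compact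
      hΩb.isCompact_closure).mono_set subset_closure
  have hbound := abs_le_mul_rpow_add_of_measure_density x hΩo.measurableSet hp₀ hC₀ hH hθ₀.le hD
    (hdens x hx D hD le_rfl) (measure_ball_lt_top.trans_le' (measure_mono inter_subset_left)).ne
    hint fun y hy ↦ by simpa [dist_eq_norm] using hHol x hx y (subset_closure hy)
  linarith [mul_rpow_le_of_mul_rpow_add_div_lt hD (by positivity) hcase]

/-- Case 2 of the proof of Lemma `EHRLEM`: when the optimal radius exceeds `diam Ω`,
i.e. `pθH (diam Ω)^{(pθ+d)/p} < d C₀^{1/p} ‖f‖_p`, one has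
`‖f‖_∞ ≤ (d/(pθ) + 1) C₀^{1/p} (diam Ω)^{-d/p} ‖f‖_p`. -/
theorem holder_interpolation_case_two
    (d : ℕ) (hd : 1 ≤ d) (θ p C₀ : ℝ) (hθ : θ ∈ Set.Ioo (0 : ℝ) 1)
    (hp : 1 ≤ p) (hC₀ : 0 < C₀)
    (Ω : Set (EuclideanSpace ℝ (Fin d))) (hΩne : Ω.Nonempty) (hΩo : IsOpen Ω)
    (hΩb : Bornology.IsBounded Ω)
    (hdens : ∀ x ∈ closure Ω, ∀ r : ℝ, 0 < r → r ≤ Metric.diam Ω →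
      ENNReal.ofReal (r ^ d / C₀) ≤ volume (Metric.ball x r ∩ Ω))
    (f : EuclideanSpace ℝ (Fin d) → ℝ) (H : ℝ) (hH : 0 ≤ H)
    (hHol : ∀ x ∈ closure Ω, ∀ y ∈ closure Ω, |f x - f y| ≤ H * ‖x - y‖ ^ θ)
    (hcase : p * θ * H * Metric.diam Ω ^ ((p * θ + d) / p) <
      (d : ℝ) * C₀ ^ (1 / p) * (∫ y in Ω, |f y| ^ p) ^ (1 / p)) :
    ∀ x ∈ closure Ω,
      |f x| ≤ ((d : ℝ) / (p * θ) + 1) * C₀ ^ (1 / p) *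
        Metric.diam Ω ^ (-(d : ℝ) / p) * (∫ y in Ω, |f y| ^ p) ^ (1 / p) :=
  holder_interpolation_case_two_general d θ p C₀ hθ hp hC₀ Ω hΩo hΩb hdens f H hH hHol hcase
end
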